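/- arXiv:2301.04028 — 4 statements merged into one kernel-verified Lean document; each statement's English description precedes it below -/
import Mathlib

section
/- For every positive integer M, every ε, ε' ∈ {0, 1/2}, every j, k ∈ ε' + ℤ, every τ in the upper half-plane, and all z₁, z₂, t ∈ ℂ such that the theta values in the denominators are nonzero: Ψ^{[M;ε]}_{j,k}(τ + 1, z₁, z₂, t) = e^{(2πi/M) j k} · Ψ^{[M;ε⊕ε']}_{j,k}(τ, z₁, z₂, t), where ε⊕ε' ∈ {0, 1/2} denotes ε + ε' reduced modulo 1. -/
open Complex

/-- Jacobi theta function with characteristics `a b ∈ {0,1}` (allowing real characteristics):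
`ϑ_{ab}(τ, z) = Σ_{n ∈ ℤ} exp(πi(n + a/2)²τ + 2πi(n + a/2)(z + b/2))`. -/
noncomputable def jTheta (a b : ℝ) (τ z : ℂ) : ℂ :=
  ∑' n : ℤ, Complex.exp ((Real.pi : ℂ) * I * ((n : ℂ) + (a : ℂ) / 2) ^ 2 * τ +
    2 * (Real.pi : ℂ) * I * ((n : ℂ) + (a : ℂ) / 2) * (z + (b : ℂ) / 2))

/-- Dedekind eta function `η(τ) = e^{πiτ/12} Π_{n=1}^∞ (1 - q^n)`, `q = e^{2πiτ}`. -/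
noncomputable def dedekindEta (τ : ℂ) : ℂ :=
  Complex.exp ((Real.pi : ℂ) * I * τ / 12) *
    ∏' n : ℕ, (1 - Complex.exp (2 * (Real.pi : ℂ) * I * τ) ^ (n + 1))

/-- The function `Ψ^{[M;ε]}_{j,k}(τ, z₁, z₂, t)` (the paper's `Ψ^{[M,1,0;ε]}_{j,k;ε'}` in closed
form for `m = 1`):
`-i e^{-2πit/M} q^{jk/M} e^{(2πi/M)(k z₁ + j z₂)} η(Mτ)³ ϑ₁₁(Mτ, z₁+z₂+(j+k)τ) /
  (ϑ₁₁(Mτ, z₁+jτ+ε) ϑ₁₁(Mτ, z₂+kτ-ε))` where `q = e^{2πiτ}`. -/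
noncomputable def Psi (M : ℕ) (ε j k : ℝ) (τ z₁ z₂ t : ℂ) : ℂ :=
  -I * Complex.exp (-(2 * (Real.pi : ℂ) * I * t) / (M : ℂ)) *
    Complex.exp (2 * (Real.pi : ℂ) * I * τ * ((j : ℂ) * (k : ℂ) / (M : ℂ))) *
    Complex.exp (2 * (Real.pi : ℂ) * I / (M : ℂ) * ((k : ℂ) * z₁ + (j : ℂ) * z₂)) *
    (dedekindEta ((M : ℂ) * τ)) ^ 3 *
    jTheta 1 1 ((M : ℂ) * τ) (z₁ + z₂ + ((j : ℂ) + (k : ℂ)) * τ) /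
    (jTheta 1 1 ((M : ℂ) * τ) (z₁ + (j : ℂ) * τ + (ε : ℂ)) *
     jTheta 1 1 ((M : ℂ) * τ) (z₂ + (k : ℂ) * τ - (ε : ℂ)))

/-!
Under `τ ↦ τ + 1` the modular variable `Mτ` moves by the integer `M`, which multiplies `η(Mτ)³`
and every `ϑ₁₁(Mτ, ·)` by the same root of unity `e^{πiM/4}`; these factors cancel between
numerator and denominator. The elliptic arguments move by the integers `p₁ = j + ε - ε''`,
`p₂ = k - ε + ε''` and `p₁ + p₂ = j + k` (integral because `2ε' ∈ ℤ`), and the resulting signs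
`(-1)^p` cancel as well. Only `q^{jk/M}` survives, picking up `e^{2πijk/M}`.
-/

open Real

lemma jTheta_add_int (a b : ℝ) (σ z : ℂ) (p : ℤ) :
    jTheta a b σ (z + p) = cexp (π * I * a * p) * jTheta a b σ z := by
  unfold jTheta
  rw [← tsum_mul_left]
  refine tsum_congr fun n => ?_
  rw [← Complex.exp_add, Complex.exp_eq_exp_iff_exists_int]
  exact ⟨n * p, by push_cast; ring⟩

lemma jTheta_one_tau_add_int (b : ℝ) (σ z : ℂ) (m : ℤ) :
    jTheta 1 b (σ + m) z = cexp (π * I * m / 4) * jTheta 1 b σ z := by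
  unfold jTheta
  rw [← tsum_mul_left]
  refine tsum_congr fun n => ?_
  -- `(n + 1/2)² = n (n + 1) + 1/4` with `n (n + 1)` even
  obtain ⟨c, hc⟩ := Int.even_mul_succ_self n
  have hc' : (n : ℂ) * (n + 1) = c + c := by exact_mod_cast hc
  rw [← Complex.exp_add, Complex.exp_eq_exp_iff_exists_int]
  exact ⟨m * c, by push_cast; linear_combination π * I * m * hc'⟩

lemma dedekindEta_add_int (σ : ℂ) (m : ℤ) :
    dedekindEta (σ + m) = cexp (π * I * m / 12) * dedekindEta σ := by
  have hq : cexp (2 * π * I * (σ + m)) = cexp (2 * π * I * σ) := by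
    rw [Complex.exp_eq_exp_iff_exists_int]
    exact ⟨m, by ring⟩
  unfold dedekindEta
  rw [hq, ← mul_assoc, ← Complex.exp_add]
  ring_nf

lemma Psi_tau_add_one (M : ℕ) (ε₁ ε₂ j k : ℝ) (p₁ p₂ : ℤ)
    (h₁ : j + ε₁ - ε₂ = p₁) (h₂ : k - ε₁ + ε₂ = p₂) (τ z₁ z₂ t : ℂ) :
    Psi M ε₁ j k (τ + 1) z₁ z₂ t =
      cexp (2 * π * I / M * (j * k)) * Psi M ε₂ j k τ z₁ z₂ t := by
  have h₁' : (j : ℂ) + ε₁ - ε₂ = p₁ := by exact_mod_cast h₁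
  have h₂' : (k : ℂ) - ε₁ + ε₂ = p₂ := by exact_mod_cast h₂
  have hMτ : (M : ℂ) * (τ + 1) = M * τ + (M : ℤ) := by push_cast; ring
  have hz : z₁ + z₂ + (j + k) * (τ + 1) = z₁ + z₂ + (j + k) * τ + p₁ + p₂ := by
    linear_combination h₁' + h₂'
  have hz₁ : z₁ + j * (τ + 1) + ε₁ = z₁ + j * τ + ε₂ + p₁ := by linear_combination h₁'
  have hz₂ : z₂ + k * (τ + 1) - ε₁ = z₂ + k * τ - ε₂ + p₂ := by linear_combination h₂'
  have hq : cexp (2 * π * I * (τ + 1) * (j * k / M)) =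
      cexp (2 * π * I / M * (j * k)) * cexp (2 * π * I * τ * (j * k / M)) := by
    rw [← Complex.exp_add]
    ring_nf
  have hη : cexp (π * I * (M : ℤ) / 12) ^ 3 = cexp (π * I * (M : ℤ) / 4) := by
    rw [← Complex.exp_nat_mul]
    ring_nf
  unfold Psi
  rw [hMτ, hz, hz₁, hz₂, hq, dedekindEta_add_int, mul_pow, hη]
  simp only [jTheta_add_int, jTheta_one_tau_add_int]
  field_simp

theorem Psi_T_transform_general (M : ℕ) (ε ε' ε'' : ℝ)
    (hε' : ε' = 0 ∨ ε' = 1/2)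
    (hmod : ∃ n : ℤ, ε + ε' = ε'' + n)
    (j k : ℝ) (hj : ∃ n : ℤ, j = ε' + n) (hk : ∃ n : ℤ, k = ε' + n)
    (τ : ℂ) (z₁ z₂ t : ℂ) :
    Psi M ε j k (τ + 1) z₁ z₂ t =
      Complex.exp (2 * (Real.pi : ℂ) * I / (M : ℂ) * ((j : ℂ) * (k : ℂ))) *
        Psi M ε'' j k τ z₁ z₂ t := by
  obtain ⟨n, hn⟩ := hmod
  obtain ⟨nj, rfl⟩ := hj
  obtain ⟨nk, rfl⟩ := hk
  obtain ⟨d, hd⟩ : ∃ d : ℤ, 2 * ε' = d := by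
    rcases hε' with rfl | rfl
    exacts [⟨0, by norm_num⟩, ⟨1, by norm_num⟩]
  exact Psi_tau_add_one M ε ε'' _ _ (nj + n) (d + nk - n)
    (by push_cast; linarith) (by push_cast; linarith) τ z₁ z₂ t

/-- Modular T-transformation of `Ψ^{[M;ε]}_{j,k}` (Lemma 2.1(2) of the paper for `m = 1`);
`ε''` is `ε + ε'` reduced modulo `1`. -/
theorem Psi_T_transform (M : ℕ) (hM : 0 < M) (ε ε' ε'' : ℝ)
    (hε : ε = 0 ∨ ε = 1/2) (hε' : ε' = 0 ∨ ε' = 1/2)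
    (hε'' : ε'' = 0 ∨ ε'' = 1/2) (hmod : ∃ n : ℤ, ε + ε' = ε'' + n)
    (j k : ℝ) (hj : ∃ n : ℤ, j = ε' + n) (hk : ∃ n : ℤ, k = ε' + n)
    (τ : ℂ) (hτ : 0 < τ.im) (z₁ z₂ t : ℂ)
    (h1 : jTheta 1 1 ((M : ℂ) * (τ + 1)) (z₁ + (j : ℂ) * (τ + 1) + (ε : ℂ)) ≠ 0)
    (h2 : jTheta 1 1 ((M : ℂ) * (τ + 1)) (z₂ + (k : ℂ) * (τ + 1) - (ε : ℂ)) ≠ 0)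
    (h3 : jTheta 1 1 ((M : ℂ) * τ) (z₁ + (j : ℂ) * τ + (ε'' : ℂ)) ≠ 0)
    (h4 : jTheta 1 1 ((M : ℂ) * τ) (z₂ + (k : ℂ) * τ - (ε'' : ℂ)) ≠ 0) :
    Psi M ε j k (τ + 1) z₁ z₂ t =
      Complex.exp (2 * (Real.pi : ℂ) * I / (M : ℂ) * ((j : ℂ) * (k : ℂ))) *
        Psi M ε'' j k τ z₁ z₂ t :=
  Psi_T_transform_general M ε ε' ε'' hε' hmod j k hj hk τ z₁ z₂ t
end

section
/- For every positive integer M, every ε ∈ {0, 1/2}, all real j, k, all integers a, b, every τ in the upper half-plane, and all z₁, z₂ ∈ ℂ such that the theta values in the denominators are nonzero: Ψ^{[M;ε]}_{j+aM, k+bM}(τ, z₁, z₂, 0) = e^{2πi(a−b)ε} · Ψ^{[M;ε]}_{j,k}(τ, z₁, z₂, 0). -/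
open Complex

/-!
With `T = Mτ`, theta is quasi-periodic: `ϑ_{ab}(T, z + nT) = e^{-πi n² T - 2πi n (z + b/2)} ϑ_{ab}(T, z)`.
Replacing `(j, k)` by `(j + aM, k + bM)` shifts the three theta arguments of `Ψ` by `aT`, `bT` and
`(a + b)T`, and the three multipliers so produced cancel the change of `q^{jk/M} e^{(2πi/M)(k z₁ + j z₂)}`
up to the factor `e^{2πi(a - b)ε}` coming from the shifts `±ε` in the denominator.
-/

theorem jTheta_add_int_mul (a b : ℝ) (T z : ℂ) (n : ℤ) :
    jTheta a b T (z + n * T) =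
      cexp (-(Real.pi : ℂ) * I * (n ^ 2 * T + 2 * n * (z + (b : ℂ) / 2))) * jTheta a b T z := by
  unfold jTheta
  rw [← tsum_mul_left, ← (Equiv.subRight n).tsum_eq]
  congr 1
  funext m
  simp only [Equiv.subRight_apply, ← Complex.exp_add]
  congr 1
  push_cast
  ring

theorem mul_mul_div_mul_mul_eq {K : Type*} [Field K] {p p' e₁ e₂ e₃ c x y w : K}
    (he₁ : e₁ ≠ 0) (he₂ : e₂ ≠ 0) (h : p' * e₃ = c * p * (e₁ * e₂)) :
    p' * (e₃ * x) / (e₁ * y * (e₂ * w)) = c * (p * x / (y * w)) :=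
  calc p' * (e₃ * x) / (e₁ * y * (e₂ * w)) = p' * e₃ / (e₁ * e₂) * (x / (y * w)) := by ring
    _ = c * p * (x / (y * w)) := by rw [h, mul_div_cancel_right₀ _ (mul_ne_zero he₁ he₂)]
    _ = c * (p * x / (y * w)) := by ring

theorem Psi_index_shift_general (M : ℕ) (hM : 0 < M) (ε : ℝ)
    (j k : ℝ) (a b : ℤ) (τ : ℂ) (z₁ z₂ : ℂ) :
    Psi M ε (j + a * M) (k + b * M) τ z₁ z₂ 0 =
      Complex.exp (2 * (Real.pi : ℂ) * I * ((a : ℂ) - (b : ℂ)) * (ε : ℂ)) *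
        Psi M ε j k τ z₁ z₂ 0 := by
  have hM' : (M : ℂ) ≠ 0 := Nat.cast_ne_zero.mpr hM.ne'
  have shift₁ : z₁ + ((j + a * M : ℝ) : ℂ) * τ + ε = z₁ + j * τ + ε + a * (M * τ) := by
    push_cast; ring
  have shift₂ : z₂ + ((k + b * M : ℝ) : ℂ) * τ - ε = z₂ + k * τ - ε + b * (M * τ) := by
    push_cast; ring
  have shift₃ : z₁ + z₂ + (((j + a * M : ℝ) : ℂ) + ((k + b * M : ℝ) : ℂ)) * τ =
      z₁ + z₂ + (j + k) * τ + ((a + b : ℤ) : ℂ) * (M * τ) := by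
    push_cast; ring
  unfold Psi
  rw [shift₁, shift₂, shift₃, jTheta_add_int_mul, jTheta_add_int_mul, jTheta_add_int_mul]
  refine mul_mul_div_mul_mul_eq (exp_ne_zero _) (exp_ne_zero _) ?_
  have exponents :
      cexp (2 * Real.pi * I * τ * (((j + a * M : ℝ) : ℂ) * ((k + b * M : ℝ) : ℂ) / M)) *
        cexp (2 * Real.pi * I / M * (((k + b * M : ℝ) : ℂ) * z₁ + ((j + a * M : ℝ) : ℂ) * z₂)) *
        cexp (-Real.pi * I * (((a + b : ℤ) : ℂ) ^ 2 * (M * τ) +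
          2 * ((a + b : ℤ) : ℂ) * (z₁ + z₂ + (j + k) * τ + ((1 : ℝ) : ℂ) / 2))) =
      cexp (2 * Real.pi * I * (a - b) * ε) * cexp (2 * Real.pi * I * τ * (j * k / M)) *
        cexp (2 * Real.pi * I / M * (k * z₁ + j * z₂)) *
        (cexp (-Real.pi * I * (a ^ 2 * (M * τ) + 2 * a * (z₁ + j * τ + ε + ((1 : ℝ) : ℂ) / 2))) *
          cexp (-Real.pi * I * (b ^ 2 * (M * τ) + 2 * b * (z₂ + k * τ - ε + ((1 : ℝ) : ℂ) / 2)))) := by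
    simp only [← Complex.exp_add]
    congr 1
    push_cast
    field_simp
    ring
  linear_combination (-I * cexp (-(2 * Real.pi * I * 0) / M) * dedekindEta (M * τ) ^ 3) * exponents

/-- Quasi-periodicity of `Ψ^{[M;ε]}_{j,k}` in the indices (Lemma 2.2(1) of the paper). -/
theorem Psi_index_shift (M : ℕ) (hM : 0 < M) (ε : ℝ) (hε : ε = 0 ∨ ε = 1/2)
    (j k : ℝ) (a b : ℤ) (τ : ℂ) (hτ : 0 < τ.im) (z₁ z₂ : ℂ)
    (h1 : jTheta 1 1 ((M : ℂ) * τ) (z₁ + ((j + a * M : ℝ) : ℂ) * τ + (ε : ℂ)) ≠ 0)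
    (h2 : jTheta 1 1 ((M : ℂ) * τ) (z₂ + ((k + b * M : ℝ) : ℂ) * τ - (ε : ℂ)) ≠ 0)
    (h3 : jTheta 1 1 ((M : ℂ) * τ) (z₁ + (j : ℂ) * τ + (ε : ℂ)) ≠ 0)
    (h4 : jTheta 1 1 ((M : ℂ) * τ) (z₂ + (k : ℂ) * τ - (ε : ℂ)) ≠ 0) :
    Psi M ε (j + a * M) (k + b * M) τ z₁ z₂ 0 =
      Complex.exp (2 * (Real.pi : ℂ) * I * ((a : ℂ) - (b : ℂ)) * (ε : ℂ)) *
        Psi M ε j k τ z₁ z₂ 0 :=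
  Psi_index_shift_general M hM ε j k a b τ z₁ z₂
end

section
/- For every ε, ε' ∈ {0, 1/2}, every τ in the upper half-plane, and every z ∈ ℂ such that ϑ_{1−2ε',1−2ε}(τ+1, z) ≠ 0 and ϑ_{1−2ε',1−2(ε⊕ε')}(τ, z) ≠ 0, the N=4 denominators satisfy the modular T-transformation: R^{(ε)}_{ε'}(τ + 1, z) = e^{−πi ε'} · R^{(ε⊕ε')}_{ε'}(τ, z), where ε⊕ε' ∈ {0, 1/2} denotes ε + ε' reduced modulo 1. -/
open Complex

/-- The N=4 denominator `R^{(ε)}_{ε'}(τ, z) = (-1)^{2ε} i η(τ)³ ϑ₁₁(τ, 2z) / ϑ_{1-2ε',1-2ε}(τ, z)²`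
for `ε, ε' ∈ {0, 1/2}`; here `(-1)^{2ε}` is written as `e^{2πiε}`. -/
noncomputable def Rden (ε ε' : ℝ) (τ z : ℂ) : ℂ :=
  Complex.exp (2 * (Real.pi : ℂ) * I * (ε : ℂ)) * I * (dedekindEta τ) ^ 3 *
    jTheta 1 1 τ (2 * z) / (jTheta (1 - 2 * ε') (1 - 2 * ε) τ z) ^ 2

lemma eta_T (τ : ℂ) : dedekindEta (τ + 1) =
    Complex.exp ((Real.pi : ℂ) * I / 12) * dedekindEta τ := by
  unfold dedekindEta
  rw [show 2 * (Real.pi : ℂ) * I * (τ + 1) = 2 * (Real.pi : ℂ) * I * τ + 2 * (Real.pi : ℂ) * I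
        by ring, Complex.exp_add, Complex.exp_two_pi_mul_I, mul_one,
      show (Real.pi : ℂ) * I * (τ + 1) / 12 = (Real.pi : ℂ) * I / 12 + (Real.pi : ℂ) * I * τ / 12
        by ring, Complex.exp_add]
  ring


lemma theta1_T (b : ℝ) (τ z : ℂ) :
    jTheta 1 b (τ + 1) z = Complex.exp ((Real.pi : ℂ) * I / 4) * jTheta 1 b τ z := by
  unfold jTheta
  rw [← tsum_mul_left]
  refine tsum_congr fun n => ?_
  obtain ⟨m, hm⟩ := Int.even_mul_succ_self n
  have hm' : (n : ℂ) ^ 2 + (n : ℂ) = 2 * (m : ℂ) := by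
    have : ((n * (n + 1) : ℤ) : ℂ) = ((m + m : ℤ) : ℂ) := by exact_mod_cast hm
    push_cast at this; linear_combination this
  rw [show (Real.pi : ℂ) * I * ((n : ℂ) + ((1:ℝ) : ℂ) / 2) ^ 2 * (τ + 1) +
        2 * (Real.pi : ℂ) * I * ((n : ℂ) + ((1:ℝ) : ℂ) / 2) * (z + (b : ℂ) / 2) =
      ((Real.pi : ℂ) * I / 4 + ((Real.pi : ℂ) * I * ((n : ℂ) + ((1:ℝ) : ℂ) / 2) ^ 2 * τ +
        2 * (Real.pi : ℂ) * I * ((n : ℂ) + ((1:ℝ) : ℂ) / 2) * (z + (b : ℂ) / 2))) +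
      (m : ℂ) * (2 * (Real.pi : ℂ) * I) from by
        push_cast
        linear_combination (Real.pi : ℂ) * I * hm',
    Complex.exp_add, Complex.exp_int_mul_two_pi_mul_I, mul_one, Complex.exp_add]

lemma theta0_T (b : ℝ) (τ z : ℂ) :
    jTheta 0 b (τ + 1) z = jTheta 0 (b + 1) τ z := by
  unfold jTheta
  refine tsum_congr fun n => ?_
  obtain ⟨m, hm⟩ := Int.even_mul_succ_self (n - 1)
  have hm' : (n : ℂ) ^ 2 - (n : ℂ) = 2 * (m : ℂ) := by
    have : (((n - 1) * (n - 1 + 1) : ℤ) : ℂ) = ((m + m : ℤ) : ℂ) := by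
      exact_mod_cast hm
    push_cast at this; linear_combination this
  rw [show (Real.pi : ℂ) * I * ((n : ℂ) + ((0:ℝ) : ℂ) / 2) ^ 2 * (τ + 1) +
        2 * (Real.pi : ℂ) * I * ((n : ℂ) + ((0:ℝ) : ℂ) / 2) * (z + (b : ℂ) / 2) =
      ((Real.pi : ℂ) * I * ((n : ℂ) + ((0:ℝ) : ℂ) / 2) ^ 2 * τ +
        2 * (Real.pi : ℂ) * I * ((n : ℂ) + ((0:ℝ) : ℂ) / 2) * (z + (((b + 1 : ℝ)) : ℂ) / 2)) +
      (m : ℂ) * (2 * (Real.pi : ℂ) * I) from by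
        push_cast
        linear_combination (Real.pi : ℂ) * I * hm',
    Complex.exp_add, Complex.exp_int_mul_two_pi_mul_I, mul_one]

lemma theta0_per (b : ℝ) (τ z : ℂ) :
    jTheta 0 (b + 2) τ z = jTheta 0 b τ z := by
  unfold jTheta
  refine tsum_congr fun n => ?_
  rw [show (Real.pi : ℂ) * I * ((n : ℂ) + ((0:ℝ) : ℂ) / 2) ^ 2 * τ +
        2 * (Real.pi : ℂ) * I * ((n : ℂ) + ((0:ℝ) : ℂ) / 2) * (z + (((b + 2 : ℝ)) : ℂ) / 2) =
      ((Real.pi : ℂ) * I * ((n : ℂ) + ((0:ℝ) : ℂ) / 2) ^ 2 * τ +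
        2 * (Real.pi : ℂ) * I * ((n : ℂ) + ((0:ℝ) : ℂ) / 2) * (z + (b : ℂ) / 2)) +
      (n : ℂ) * (2 * (Real.pi : ℂ) * I) from by push_cast; ring,
    Complex.exp_add, Complex.exp_int_mul_two_pi_mul_I, mul_one]

lemma cube_exp : Complex.exp ((Real.pi : ℂ) * I / 12) ^ 3 =
    Complex.exp ((Real.pi : ℂ) * I / 4) := by
  rw [show ((Real.pi : ℂ) * I / 4) = (3 : ℕ) * ((Real.pi : ℂ) * I / 12) by push_cast; ring,
    Complex.exp_nat_mul]

/-- Modular T-transformation of the N=4 denominators (formula (5.5b) of the paper);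
`ε''` is `ε + ε'` reduced modulo `1`. -/
theorem Rden_T_transform (ε ε' ε'' : ℝ) (hε : ε = 0 ∨ ε = 1/2) (hε' : ε' = 0 ∨ ε' = 1/2)
    (hε'' : ε'' = 0 ∨ ε'' = 1/2) (hmod : ∃ n : ℤ, ε + ε' = ε'' + n)
    (τ : ℂ) (hτ : 0 < τ.im) (z : ℂ)
    (h1 : jTheta (1 - 2 * ε') (1 - 2 * ε) (τ + 1) z ≠ 0)
    (h2 : jTheta (1 - 2 * ε') (1 - 2 * ε'') τ z ≠ 0) :
    Rden ε ε' (τ + 1) z =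
      Complex.exp (-((Real.pi : ℂ) * I * (ε' : ℂ))) * Rden ε'' ε' τ z := by
  obtain ⟨n, hn⟩ := hmod
  rcases hε' with rfl | rfl
  · -- ε' = 0
    have hee : ε'' = ε := by
      rcases hε with rfl | rfl <;> rcases hε'' with rfl | rfl
      · rfl
      · exfalso
        have h' : ((2 * n : ℤ) : ℝ) = -1 := by push_cast; linarith
        have : (2 * n : ℤ) = -1 := by exact_mod_cast h'
        omega
      · exfalso
        have h' : ((2 * n : ℤ) : ℝ) = 1 := by push_cast; linarith
        have : (2 * n : ℤ) = 1 := by exact_mod_cast h'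
        omega
      · rfl
    subst hee
    norm_num at h2 ⊢
    unfold Rden
    norm_num
    rw [eta_T, theta1_T, theta1_T]
    rw [mul_pow, mul_pow, cube_exp]
    field_simp
  · -- ε' = 1/2
    rcases hε with rfl | rfl
    · have hee : ε'' = 1/2 := by
        rcases hε'' with rfl | rfl
        · exfalso
          have h' : ((2 * n : ℤ) : ℝ) = 1 := by push_cast; linarith
          have : (2 * n : ℤ) = 1 := by exact_mod_cast h'
          omega
        · rfl
      subst hee
      norm_num at h1 h2 ⊢
      unfold Rden
      norm_num
      rw [eta_T, theta1_T, theta0_T, show (1:ℝ)+1 = 0+2 by norm_num, theta0_per]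
      have key : cexp ((Real.pi:ℂ)*I/4) * cexp ((Real.pi:ℂ)*I/4) =
          cexp (-((Real.pi:ℂ)*I*(1/2))) * cexp (2*(Real.pi:ℂ)*I*(1/2)) := by
        rw [← Complex.exp_add, ← Complex.exp_add]; congr 1; ring
      rw [mul_pow, cube_exp]
      linear_combination (I * dedekindEta τ ^ 3 * jTheta 1 1 τ (2*z) /
        jTheta 0 0 τ z ^ 2) * key
    · have hee : ε'' = 0 := by
        rcases hε'' with rfl | rfl
        · rfl
        · exfalso
          have h' : ((2 * n : ℤ) : ℝ) = 1 := by push_cast; linarith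
          have : (2 * n : ℤ) = 1 := by exact_mod_cast h'
          omega
      subst hee
      norm_num at h1 h2 ⊢
      unfold Rden
      norm_num
      rw [eta_T, theta1_T, theta0_T]
      norm_num
      have key : cexp (2*(Real.pi:ℂ)*I*(1/2)) * (cexp ((Real.pi:ℂ)*I/4) * cexp ((Real.pi:ℂ)*I/4)) =
          cexp (-((Real.pi:ℂ)*I*(1/2))) := by
        rw [← Complex.exp_add, ← Complex.exp_add,
          show 2*(Real.pi:ℂ)*I*(1/2) + ((Real.pi:ℂ)*I/4 + (Real.pi:ℂ)*I/4) =
            -((Real.pi:ℂ)*I*(1/2)) + 2*(Real.pi:ℂ)*I by ring,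
          Complex.exp_add, Complex.exp_two_pi_mul_I, mul_one]
      rw [mul_pow, cube_exp]
      linear_combination (I * dedekindEta τ ^ 3 * jTheta 1 1 τ (2*z) /
        jTheta 0 1 τ z ^ 2) * key
end

section
/- For every positive integer M, every j ∈ 1/2 + ℤ, every τ in the upper half-plane, and every z ∈ ℂ at which all theta values occurring in denominators below are nonzero: Ψ^{[M;0]}_{j,j}(τ, z, z, 0) / R^{NS,−}(τ, z) = −q^{j²/M} e^{(4πi/M) j z} · [ϑ₀₀(Mτ, z + jτ) ϑ₀₁(Mτ, z + jτ) ϑ₁₀(Mτ, z + jτ) / ϑ₁₁(Mτ, z + jτ)] · [ϑ₀₁(τ, z) / (ϑ₀₀(τ, z) ϑ₁₀(τ, z) ϑ₁₁(τ, z))]. -/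
open Complex

/-- The N=4 Neveu–Schwarz super-denominator `R^{NS,-}(τ,z) = i η(τ)³ ϑ₁₁(τ,2z) / ϑ₀₁(τ,z)²`. -/
noncomputable def RNSminus (τ z : ℂ) : ℂ :=
  I * (dedekindEta τ) ^ 3 * jTheta 1 1 τ (2 * z) / (jTheta 0 1 τ z) ^ 2

/-!
Both `Ψ` and `R^{NS,-}` contain `η³ ϑ₁₁(2·)`, which the duplication formula
`η(τ)³ ϑ₁₁(τ, 2z) = ϑ₀₀ ϑ₀₁ ϑ₁₀ ϑ₁₁ (τ, z)` turns into the four theta functions; the claim is then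
algebra. The duplication formula is read off from the Jacobi triple product: factor by factor, the
four products on the right pair up into `η³` times the even- and odd-indexed factors of the product
for `ϑ₁₁(τ, 2z)`.

The triple product is the limit `m → ∞` of the finite identity
`∏_{i<m} (1 + x p^{2i+1}) (1 + x⁻¹ p^{2i+1}) = ∑_{|l| ≤ m} [2m, m+l]_{p²} p^{l²} x^l`,
which is Cauchy's `q`-binomial theorem at `t = x p^{1-2m}`. Each Gaussian binomial tends to
`1 / ∏ (1 - p^{2i+2})` and all of them are bounded by `1 / ∏ (1 - |p|^{2i+2})`, so Tannery's
theorem passes to the limit in the sum.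
-/

open Finset Filter Topology Real

section GaussBinom

variable {R : Type*}

/-- The Gaussian binomial coefficient `[m, k]_q`, by the `q`-Pascal rule. -/
def gaussBinom [CommSemiring R] (q : R) : ℕ → ℕ → R
  | _, 0 => 1
  | 0, _ + 1 => 0
  | m + 1, k + 1 => gaussBinom q m k + q ^ (k + 1) * gaussBinom q m (k + 1)

section CommSemiring

variable [CommSemiring R] (q : R)

@[simp]
lemma gaussBinom_zero_right (m : ℕ) : gaussBinom q m 0 = 1 := by
  cases m <;> rfl

lemma gaussBinom_succ_succ (m k : ℕ) :
    gaussBinom q (m + 1) (k + 1) = gaussBinom q m k + q ^ (k + 1) * gaussBinom q m (k + 1) :=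
  rfl

lemma gaussBinom_eq_zero_of_lt : ∀ {m k : ℕ}, m < k → gaussBinom q m k = 0
  | 0, _ + 1, _ => rfl
  | m + 1, k + 1, h => by
    rw [gaussBinom_succ_succ, gaussBinom_eq_zero_of_lt (by omega),
      gaussBinom_eq_zero_of_lt (by omega), mul_zero, add_zero]

theorem prod_one_add_mul_pow_eq_sum_gaussBinom (m : ℕ) (t : R) :
    ∏ j ∈ range m, (1 + t * q ^ j) =
      ∑ k ∈ range (m + 1), q ^ k.choose 2 * gaussBinom q m k * t ^ k := by
  induction m generalizing t with
  | zero => simp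
  | succ m ih =>
    set a : ℕ → R := fun k => q ^ (k.choose 2 + k) * gaussBinom q m k
    have hshift : ∏ j ∈ range m, (1 + t * q ^ (j + 1)) = ∑ k ∈ range (m + 1), a k * t ^ k := by
      have hq : ∀ j, t * q ^ (j + 1) = t * q * q ^ j := fun j => by ring
      simp_rw [hq, ih]
      exact sum_congr rfl fun k _ => by simp only [a, mul_pow, pow_add]; ring
    have hlow : ∑ k ∈ range (m + 1), a k * t ^ k =
        ∑ k ∈ range (m + 1), a (k + 1) * t ^ (k + 1) + 1 := by
      rw [sum_range_succ', sum_range_succ (fun k => a (k + 1) * t ^ (k + 1)),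
        show a (m + 1) = 0 by simp [a, gaussBinom_eq_zero_of_lt q (Nat.lt_succ_self m)]]
      simp [a]
    have hpascal : ∀ k, q ^ (k + 1).choose 2 * gaussBinom q (m + 1) (k + 1) = a k + a (k + 1) := by
      intro k
      simp only [a, gaussBinom_succ_succ, Nat.choose_succ_succ', Nat.choose_one_right, pow_add]
      ring
    have htimes :
        ∑ k ∈ range (m + 1), a k * t ^ (k + 1) = (∑ k ∈ range (m + 1), a k * t ^ k) * t := by
      simp only [sum_mul, pow_succ, mul_assoc]
    rw [prod_range_succ', hshift, sum_range_succ' _ (m + 1)]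
    simp only [hpascal, add_mul, sum_add_distrib, htimes]
    rw [hlow]
    simp only [pow_zero, mul_one, Nat.choose_zero_succ, gaussBinom_zero_right]
    ring

end CommSemiring

section CommRing

variable [CommRing R] (q : R)

/-- The `q`-Pochhammer symbol `(q^a; q)_k`. -/
def qPochhammer (a k : ℕ) : R :=
  ∏ i ∈ range k, (1 - q ^ (i + a))

lemma qPochhammer_succ (a k : ℕ) :
    qPochhammer q a (k + 1) = qPochhammer q a k * (1 - q ^ (k + a)) :=
  prod_range_succ _ _

lemma qPochhammer_succ' (a k : ℕ) :
    qPochhammer q a (k + 1) = (1 - q ^ a) * qPochhammer q (a + 1) k := by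
  simp only [qPochhammer, prod_range_succ', zero_add, add_assoc, add_comm 1 a, mul_comm]

theorem gaussBinom_add_mul_qPochhammer : ∀ n k : ℕ,
    gaussBinom q (n + k) k * qPochhammer q 1 k = qPochhammer q (n + 1) k
  | n, 0 => by simp [qPochhammer]
  | 0, k + 1 => by
    have ih := gaussBinom_add_mul_qPochhammer 0 k
    simp only [zero_add] at ih ⊢
    rw [gaussBinom_succ_succ, gaussBinom_eq_zero_of_lt q (Nat.lt_succ_self k), mul_zero, add_zero,
      qPochhammer_succ, ← mul_assoc, ih]
  | n + 1, k + 1 => by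
    have ih₁ := gaussBinom_add_mul_qPochhammer (n + 1) k
    have ih₂ := gaussBinom_add_mul_qPochhammer n (k + 1)
    rw [show n + (k + 1) = n + 1 + k by omega] at ih₂
    rw [show n + 1 + (k + 1) = n + 1 + k + 1 by omega, gaussBinom_succ_succ, add_mul, mul_assoc,
      ih₂, qPochhammer_succ q 1, ← mul_assoc, ih₁, qPochhammer_succ', qPochhammer_succ]
    ring_nf

end CommRing

section Normed

variable [NormedCommRing R] [NormOneClass R]

lemma norm_gaussBinom_le (q : R) : ∀ m k : ℕ, ‖gaussBinom q m k‖ ≤ gaussBinom ‖q‖ m k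
  | _, 0 => by simp
  | 0, _ + 1 => by simp [gaussBinom]
  | m + 1, k + 1 => by
    rw [gaussBinom_succ_succ, gaussBinom_succ_succ]
    refine (norm_add_le _ _).trans (add_le_add (norm_gaussBinom_le q m k) ?_)
    refine (norm_mul_le _ _).trans (mul_le_mul (norm_pow_le q _) (norm_gaussBinom_le q m (k + 1))
      (norm_nonneg _) (by positivity))

lemma summable_norm_mul_pow {p : R} (c : R) (hp : ‖p‖ < 1) {a : ℕ} (ha : 0 < a) (b : ℕ) :
    Summable fun n : ℕ => ‖c * p ^ (a * n + b)‖ := by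
  refine .of_nonneg_of_le (fun _ => norm_nonneg _) (fun n => ?_)
    ((summable_geometric_of_lt_one (norm_nonneg p) hp).mul_left ‖c‖)
  refine (norm_mul_le _ _).trans (mul_le_mul_of_nonneg_left ((norm_pow_le p _).trans ?_)
    (norm_nonneg c))
  exact pow_le_pow_of_le_one (norm_nonneg p) hp.le (by nlinarith)

lemma multipliable_one_add_mul_pow [CompleteSpace R] {p : R} (c : R) (hp : ‖p‖ < 1) {a : ℕ}
    (ha : 0 < a) (b : ℕ) : Multipliable fun n : ℕ => 1 + c * p ^ (a * n + b) :=
  multipliable_one_add_of_summable (summable_norm_mul_pow c hp ha b)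

lemma multipliable_one_sub_pow_succ [CompleteSpace R] {q : R} (hq : ‖q‖ < 1) :
    Multipliable fun i : ℕ => 1 - q ^ (i + 1) := by
  simpa [sub_eq_add_neg] using multipliable_one_add_mul_pow (-1) hq one_pos 1

theorem tendsto_qPochhammer_one {α : Type*} {l : Filter α} {q : R} (hq : ‖q‖ < 1) {a : α → ℕ}
    (ha : Tendsto a l atTop) (k : α → ℕ) :
    Tendsto (fun x => qPochhammer q (a x) (k x)) l (𝓝 1) := by
  have hq0 : 0 ≤ ‖q‖ := norm_nonneg q
  have hbound : ∀ x, ‖qPochhammer q (a x) (k x) - 1‖ ≤ Real.exp (‖q‖ ^ a x / (1 - ‖q‖)) - 1 := by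
    intro x
    simp only [qPochhammer, sub_eq_add_neg (1 : R)]
    refine (norm_prod_one_add_sub_one_le _ _).trans (sub_le_sub_right (Real.exp_le_exp.2 ?_) 1)
    calc ∑ i ∈ range (k x), ‖-q ^ (i + a x)‖
        ≤ ∑ i ∈ range (k x), ‖q‖ ^ (a x + i) := sum_le_sum fun i _ => by
          rw [norm_neg, add_comm]; exact norm_pow_le q _
      _ = ∑ i ∈ Ico (a x) (a x + k x), ‖q‖ ^ i := by
          rw [sum_Ico_eq_sum_range, Nat.add_sub_cancel_left]
      _ ≤ ‖q‖ ^ a x / (1 - ‖q‖) := geom_sum_Ico_le_of_lt_one hq0 hq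
  have hlim : Tendsto (fun x => Real.exp (‖q‖ ^ a x / (1 - ‖q‖)) - 1) l (𝓝 0) := by
    have : Tendsto (fun x => ‖q‖ ^ a x / (1 - ‖q‖)) l (𝓝 0) := by
      simpa using ((tendsto_pow_atTop_nhds_zero_of_lt_one hq0 hq).comp ha).div_const (1 - ‖q‖)
    simpa using ((Real.continuous_exp.tendsto 0).comp this).sub_const 1
  simpa using (squeeze_zero_norm' (Eventually.of_forall hbound) hlim).add_const 1

end Normed

section NormedField

variable {𝕜 : Type*} [NormedField 𝕜] {q : 𝕜}

lemma one_sub_pow_succ_ne_zero (hq : ‖q‖ < 1) (i : ℕ) : 1 - q ^ (i + 1) ≠ 0 := by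
  refine sub_ne_zero.2 fun h => ?_
  have := congrArg norm h
  rw [norm_one, norm_pow] at this
  exact (pow_lt_one₀ (norm_nonneg q) hq (by omega)).ne' this

lemma tprod_one_sub_pow_succ_ne_zero [CompleteSpace 𝕜] (hq : ‖q‖ < 1) :
    ∏' i : ℕ, (1 - q ^ (i + 1)) ≠ 0 := by
  simpa [sub_eq_add_neg] using tprod_one_add_ne_zero_of_summable (f := fun i : ℕ => -q ^ (i + 1))
    (fun i => by simpa [sub_eq_add_neg] using one_sub_pow_succ_ne_zero hq i)
    (by simpa using summable_norm_mul_pow (p := q) (-1) hq one_pos 1)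

theorem tendsto_gaussBinom [CompleteSpace 𝕜] {α : Type*} {l : Filter α} (hq : ‖q‖ < 1)
    {n k : α → ℕ} (hn : Tendsto n l atTop) (hk : Tendsto k l atTop) :
    Tendsto (fun x => gaussBinom q (n x + k x) (k x)) l (𝓝 (∏' i : ℕ, (1 - q ^ (i + 1)))⁻¹) := by
  have hden : Tendsto (fun x => qPochhammer q 1 (k x)) l (𝓝 (∏' i : ℕ, (1 - q ^ (i + 1)))) :=
    (multipliable_one_sub_pow_succ hq).hasProd.tendsto_prod_nat.comp hk
  have hnum := tendsto_qPochhammer_one hq (tendsto_add_atTop_nat 1 |>.comp hn) k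
  refine ((hnum.div hden (tprod_one_sub_pow_succ_ne_zero hq)).congr fun x => ?_).trans (by simp)
  have hne : qPochhammer q 1 (k x) ≠ 0 :=
    prod_ne_zero_iff.2 fun i _ => one_sub_pow_succ_ne_zero hq i
  exact (eq_div_of_mul_eq hne (gaussBinom_add_mul_qPochhammer q _ _)).symm

end NormedField

section Real

variable {r : ℝ}

lemma qPochhammer_le_one (hr₀ : 0 ≤ r) (hr₁ : r < 1) (a k : ℕ) : qPochhammer r a k ≤ 1 :=
  prod_le_one (fun _ _ => sub_nonneg.2 (pow_le_one₀ hr₀ hr₁.le))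
    (fun _ _ => sub_le_self _ (pow_nonneg hr₀ _))

lemma tprod_one_sub_pow_succ_pos (hr₀ : 0 ≤ r) (hr₁ : r < 1) :
    0 < ∏' i : ℕ, (1 - r ^ (i + 1)) :=
  (tprod_nonneg fun _ => sub_nonneg.2 (pow_le_one₀ hr₀ hr₁.le)).lt_of_ne'
    (tprod_one_sub_pow_succ_ne_zero (by rwa [Real.norm_of_nonneg hr₀]))

lemma tprod_one_sub_pow_succ_le_qPochhammer (hr₀ : 0 ≤ r) (hr₁ : r < 1) (k : ℕ) :
    ∏' i : ℕ, (1 - r ^ (i + 1)) ≤ qPochhammer r 1 k := by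
  have hr : ‖r‖ < 1 := by rwa [Real.norm_of_nonneg hr₀]
  refine Antitone.le_of_tendsto (antitone_nat_of_succ_le fun n => ?_)
    (multipliable_one_sub_pow_succ hr).hasProd.tendsto_prod_nat k
  rw [prod_range_succ]
  exact mul_le_of_le_one_right (prod_nonneg fun i _ => sub_nonneg.2 (pow_le_one₀ hr₀ hr₁.le))
    (sub_le_self _ (pow_nonneg hr₀ _))

theorem gaussBinom_le_inv_tprod (hr₀ : 0 ≤ r) (hr₁ : r < 1) (m k : ℕ) :
    gaussBinom r m k ≤ (∏' i : ℕ, (1 - r ^ (i + 1)))⁻¹ := by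
  have hE := tprod_one_sub_pow_succ_pos hr₀ hr₁
  rcases lt_or_ge m k with hmk | hkm
  · rw [gaussBinom_eq_zero_of_lt r hmk]; positivity
  obtain ⟨n, rfl⟩ := Nat.exists_eq_add_of_le' hkm
  have hP := tprod_one_sub_pow_succ_le_qPochhammer hr₀ hr₁ k
  have hP₀ := hE.trans_le hP
  calc gaussBinom r (n + k) k = qPochhammer r (n + 1) k / qPochhammer r 1 k :=
        eq_div_of_mul_eq hP₀.ne' (gaussBinom_add_mul_qPochhammer r n k)
    _ ≤ 1 / qPochhammer r 1 k := div_le_div_of_nonneg_right (qPochhammer_le_one hr₀ hr₁ _ _) hP₀.le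
    _ ≤ _ := by rw [one_div]; exact inv_anti₀ hE hP

end Real

end GaussBinom

lemma two_mul_choose_two_add_self (k : ℕ) : 2 * k.choose 2 + k = k ^ 2 := by
  induction k with
  | zero => rfl
  | succ n ih => rw [Nat.choose_succ_succ', Nat.choose_one_right]; nlinarith

lemma prod_pow_two_mul_add_one {M : Type*} [CommMonoid M] (a : M) (m : ℕ) :
    ∏ i ∈ range m, a ^ (2 * i + 1) = a ^ (m ^ 2) := by
  induction m with
  | zero => simp
  | succ m ih => rw [prod_range_succ, ih, ← pow_add]; ring_nf

section FiniteTripleProduct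

variable {K : Type*} [Field K] {p x : K}

lemma sq_pow_choose_two_mul_pow (hp : p ≠ 0) (hx : x ≠ 0) (m k : ℕ) :
    (p ^ 2) ^ k.choose 2 * (x * p ^ (1 - 2 * m : ℤ)) ^ k =
      x ^ m * (p ^ (m ^ 2))⁻¹ * (p ^ (((k : ℤ) - m) ^ 2) * x ^ ((k : ℤ) - m)) := by
  have hchoose : (p ^ 2) ^ k.choose 2 = p ^ ((k : ℤ) ^ 2 - k) := by
    have := two_mul_choose_two_add_self k
    zify at this
    rw [← pow_mul, ← zpow_natCast]
    push_cast
    congr 1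
    linarith
  have hxk : x ^ m * x ^ ((k : ℤ) - m) = x ^ (k : ℤ) := by
    rw [← zpow_natCast, ← zpow_add₀ hx]; ring_nf
  have hpk : (p ^ (m ^ 2))⁻¹ * p ^ (((k : ℤ) - m) ^ 2) =
      p ^ ((k : ℤ) ^ 2 - k) * p ^ ((1 - 2 * m : ℤ) * k) := by
    rw [← zpow_natCast, ← zpow_neg, ← zpow_add₀ hp, ← zpow_add₀ hp]; push_cast; ring_nf
  rw [hchoose, mul_pow, ← zpow_natCast (p ^ _), ← zpow_mul, ← zpow_natCast x k]
  linear_combination -(x ^ (k : ℤ) * hpk) - (p ^ (m ^ 2))⁻¹ * p ^ (((k : ℤ) - m) ^ 2) * hxk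

theorem prod_mul_prod_eq_sum_gaussBinom (hp : p ≠ 0) (hx : x ≠ 0) (m : ℕ) :
    (∏ i ∈ range m, (1 + x * p ^ (2 * i + 1))) * ∏ i ∈ range m, (1 + x⁻¹ * p ^ (2 * i + 1)) =
      ∑ l ∈ Icc (-m : ℤ) m, gaussBinom (p ^ 2) (2 * m) (m + l).toNat * (p ^ (l ^ 2) * x ^ l) := by
  set t := x * p ^ (1 - 2 * m : ℤ) with ht
  set c := x ^ m * (p ^ (m ^ 2))⁻¹
  have hupper (i : ℕ) : 1 + t * (p ^ 2) ^ (m + i) = 1 + x * p ^ (2 * i + 1) := by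
    rw [ht, mul_assoc, ← pow_mul, ← zpow_natCast, ← zpow_natCast p, ← zpow_add₀ hp]
    push_cast; ring_nf
  have hlower (i : ℕ) (hi : i < m) :
      1 + t * (p ^ 2) ^ (m - 1 - i) = x * (p ^ (2 * i + 1))⁻¹ * (1 + x⁻¹ * p ^ (2 * i + 1)) := by
    have he : (1 - 2 * m + ((2 * (m - 1 - i) : ℕ) : ℤ)) = -((2 * i + 1 : ℕ) : ℤ) := by omega
    rw [ht, mul_assoc, ← pow_mul, ← zpow_natCast, ← zpow_add₀ hp, he, zpow_neg, zpow_natCast,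
      mul_add, mul_one, add_comm, mul_mul_mul_comm, mul_inv_cancel₀ hx, one_mul,
      inv_mul_cancel₀ (pow_ne_zero _ hp)]
  have hterm (k : ℕ) : (p ^ 2) ^ k.choose 2 * gaussBinom (p ^ 2) (2 * m) k * t ^ k =
      c * (gaussBinom (p ^ 2) (2 * m) k * (p ^ (((k : ℤ) - m) ^ 2) * x ^ ((k : ℤ) - m))) := by
    rw [mul_right_comm, sq_pow_choose_two_mul_pow hp hx]
    ring
  have hreindex : ∑ k ∈ range (2 * m + 1),
      gaussBinom (p ^ 2) (2 * m) k * (p ^ (((k : ℤ) - m) ^ 2) * x ^ ((k : ℤ) - m)) =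
      ∑ l ∈ Icc (-m : ℤ) m, gaussBinom (p ^ 2) (2 * m) (m + l).toNat * (p ^ (l ^ 2) * x ^ l) := by
    refine sum_nbij' (fun k => (k : ℤ) - m) (fun l => (m + l).toNat) ?_ ?_ ?_ ?_ ?_ <;>
      intro a ha <;>
      simp only [mem_range, mem_Icc, add_sub_cancel, Int.toNat_natCast] at ha ⊢ <;> omega
  have hsum := prod_one_add_mul_pow_eq_sum_gaussBinom (p ^ 2) (2 * m) t
  -- The factors `j ≥ m` give the first product, the reflected factors `j < m` the second one.
  rw [two_mul, prod_range_add, ← prod_range_reflect,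
    prod_congr rfl fun i hi => hlower i (mem_range.1 hi), prod_congr rfl fun i _ => hupper i,
    prod_mul_distrib, prod_mul_distrib, prod_const, card_range, prod_inv_distrib,
    prod_pow_two_mul_add_one, ← two_mul, sum_congr rfl fun k _ => hterm k, ← mul_sum,
    hreindex] at hsum
  have hc : c ≠ 0 := by positivity
  exact mul_left_cancel₀ hc (by rw [← hsum]; ring)

end FiniteTripleProduct

section TripleProduct

def jacobiTripleFactor {K : Type*} [Field K] (p x : K) (n : ℕ) : K :=
  (1 - p ^ (2 * n + 2)) * (1 + x * p ^ (2 * n + 1)) * (1 + x⁻¹ * p ^ (2 * n + 1))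

section Multipliable

variable {𝕜 : Type*} [NormedField 𝕜] [CompleteSpace 𝕜] {p : 𝕜}

lemma multipliable_one_sub_pow_two_mul_add_two (hp : ‖p‖ < 1) :
    Multipliable fun n : ℕ => 1 - p ^ (2 * n + 2) := by
  simpa [sub_eq_add_neg] using multipliable_one_add_mul_pow (-1) hp two_pos 2

lemma multipliable_jacobiTripleFactor (hp : ‖p‖ < 1) (x : 𝕜) :
    Multipliable (jacobiTripleFactor p x) :=
  ((multipliable_one_sub_pow_two_mul_add_two hp).mul
    (multipliable_one_add_mul_pow x hp two_pos 1)).mul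
    (multipliable_one_add_mul_pow x⁻¹ hp two_pos 1)

end Multipliable

lemma norm_cexp_pi_mul_I_mul_lt_one {τ : ℂ} (hτ : 0 < τ.im) : ‖cexp (π * I * τ)‖ < 1 := by
  rw [norm_exp, Real.exp_lt_one_iff]
  simpa using mul_pos Real.pi_pos hτ

lemma jacobiTheta₂_term_eq_zpow (n : ℤ) (z τ : ℂ) :
    jacobiTheta₂_term n z τ = cexp (π * I * τ) ^ (n ^ 2) * cexp (2 * π * I * z) ^ n := by
  rw [jacobiTheta₂_term, ← exp_int_mul, ← exp_int_mul, ← Complex.exp_add]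
  push_cast
  ring_nf

lemma tendsto_toNat_natCast_add (l : ℤ) : Tendsto (fun m : ℕ => ((m : ℤ) + l).toNat) atTop atTop :=
  tendsto_atTop_atTop.2 fun b => ⟨b + l.natAbs, fun m hm => by omega⟩

theorem tendsto_sum_gaussBinom_mul_jacobiTheta₂_term (z : ℂ) {τ : ℂ} (hτ : 0 < τ.im) :
    Tendsto (fun m : ℕ => ∑ l ∈ Icc (-m : ℤ) m,
        gaussBinom (cexp (π * I * τ) ^ 2) (2 * m) (m + l).toNat * jacobiTheta₂_term l z τ) atTop
      (𝓝 ((∏' i : ℕ, (1 - (cexp (π * I * τ) ^ 2) ^ (i + 1)))⁻¹ * jacobiTheta₂ z τ)) := by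
  set q := cexp (π * I * τ) ^ 2
  have hq : ‖q‖ < 1 := by
    simpa [q, norm_pow] using
      pow_lt_one₀ (norm_nonneg _) (norm_cexp_pi_mul_I_mul_lt_one hτ) two_ne_zero
  let F : ℕ → ℤ → ℂ := fun m l =>
    if l ∈ Icc (-m : ℤ) m then gaussBinom q (2 * m) (m + l).toNat * jacobiTheta₂_term l z τ else 0
  have hF (m : ℕ) : ∑' l, F m l = ∑ l ∈ Icc (-m : ℤ) m,
      gaussBinom q (2 * m) (m + l).toNat * jacobiTheta₂_term l z τ :=
    (tsum_eq_sum fun l hl => if_neg hl).trans (sum_congr rfl fun l hl => if_pos hl)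
  have hlim (l : ℤ) : Tendsto (F · l) atTop
      (𝓝 ((∏' i : ℕ, (1 - q ^ (i + 1)))⁻¹ * jacobiTheta₂_term l z τ)) := by
    refine ((tendsto_gaussBinom hq (tendsto_toNat_natCast_add (-l))
      (tendsto_toNat_natCast_add l)).mul_const _).congr' ?_
    filter_upwards [eventually_ge_atTop l.natAbs] with m hm
    simp only [F, if_pos (show l ∈ Icc (-m : ℤ) m by simp only [mem_Icc]; omega)]
    congr 2
    omega
  have hbound (m : ℕ) (l : ℤ) :
      ‖F m l‖ ≤ (∏' i : ℕ, (1 - ‖q‖ ^ (i + 1)))⁻¹ * ‖jacobiTheta₂_term l z τ‖ := by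
    have hC := tprod_one_sub_pow_succ_pos (norm_nonneg q) hq
    simp only [F]
    split_ifs
    · rw [norm_mul]
      exact mul_le_mul_of_nonneg_right ((norm_gaussBinom_le q _ _).trans
        (gaussBinom_le_inv_tprod (norm_nonneg q) hq _ _)) (norm_nonneg _)
    · rw [norm_zero]; positivity
  have hsum : Summable fun l : ℤ => ‖jacobiTheta₂_term l z τ‖ :=
    summable_norm_iff.2 ((summable_jacobiTheta₂_term_iff z τ).2 hτ)
  simpa only [hF, tsum_mul_left, jacobiTheta₂] using
    tendsto_tsum_of_dominated_convergence (hsum.mul_left _) hlim (Eventually.of_forall hbound)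

theorem jacobiTheta₂_eq_tprod (z : ℂ) {τ : ℂ} (hτ : 0 < τ.im) :
    jacobiTheta₂ z τ =
      ∏' n : ℕ, jacobiTripleFactor (cexp (π * I * τ)) (cexp (2 * π * I * z)) n := by
  set p := cexp (π * I * τ)
  set x := cexp (2 * π * I * z)
  have hp : ‖p‖ < 1 := norm_cexp_pi_mul_I_mul_lt_one hτ
  have hA := multipliable_one_sub_pow_two_mul_add_two hp
  have hB := multipliable_one_add_mul_pow x hp two_pos 1
  have hC := multipliable_one_add_mul_pow x⁻¹ hp two_pos 1
  have hpartial (m : ℕ) : ∑ l ∈ Icc (-m : ℤ) m,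
      gaussBinom (p ^ 2) (2 * m) (m + l).toNat * jacobiTheta₂_term l z τ =
      (∏ i ∈ range m, (1 + x * p ^ (2 * i + 1))) * ∏ i ∈ range m, (1 + x⁻¹ * p ^ (2 * i + 1)) := by
    rw [prod_mul_prod_eq_sum_gaussBinom (Complex.exp_ne_zero _) (Complex.exp_ne_zero _)]
    simp only [jacobiTheta₂_term_eq_zpow, p]
  have hlim := tendsto_nhds_unique (tendsto_sum_gaussBinom_mul_jacobiTheta₂_term z hτ)
    ((hB.hasProd.tendsto_prod_nat.mul hC.hasProd.tendsto_prod_nat).congr fun m => (hpartial m).symm)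
  have hE : ∏' i : ℕ, (1 - (p ^ 2) ^ (i + 1)) = ∏' n : ℕ, (1 - p ^ (2 * n + 2)) :=
    tprod_congr fun n => by ring
  have hE0 : ∏' i : ℕ, (1 - (p ^ 2) ^ (i + 1)) ≠ 0 :=
    tprod_one_sub_pow_succ_ne_zero (by simpa using pow_lt_one₀ (norm_nonneg p) hp two_ne_zero)
  rw [inv_mul_eq_iff_eq_mul₀ hE0, hE] at hlim
  rw [hlim, ← mul_assoc, ← hA.tprod_mul hB, ← (hA.mul hB).tprod_mul hC]
  rfl

end TripleProduct

def jacobiSqFactor {K : Type*} [Field K] (p x : K) (n : ℕ) : K :=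
  (1 - x ^ 2 * p ^ (2 * n + 2)) * (1 - (x ^ 2)⁻¹ * p ^ (2 * n))

section Field

variable {K : Type*} [Field K] {p x : K}

lemma jacobiTripleFactor_neg_sq_mul (hp : p ≠ 0) (hx : x ≠ 0) (n : ℕ) :
    jacobiTripleFactor p (-(x ^ 2 * p)) n = (1 - p ^ (2 * n + 2)) * jacobiSqFactor p x n := by
  simp only [jacobiTripleFactor, jacobiSqFactor]
  field_simp
  ring

lemma jacobiTripleFactor_mul_four (hp : p ≠ 0) (hx : x ≠ 0) (n : ℕ) :
    jacobiTripleFactor p x n * jacobiTripleFactor p (-x) n * jacobiTripleFactor p (x * p) n *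
        jacobiTripleFactor p (-(x * p)) n =
      (1 - p ^ (2 * n + 2)) ^ 4 *
        (jacobiSqFactor p x (2 * n) * jacobiSqFactor p x (2 * n + 1)) := by
  simp only [jacobiTripleFactor, jacobiSqFactor]
  field_simp
  ring

end Field

lemma multipliable_jacobiSqFactor_two_mul_add {𝕜 : Type*} [NormedField 𝕜] [CompleteSpace 𝕜]
    {p : 𝕜} (hp : ‖p‖ < 1) (x : 𝕜) (b : ℕ) :
    Multipliable fun n => jacobiSqFactor p x (2 * n + b) :=
  ((multipliable_one_add_mul_pow (-x ^ 2) hp four_pos (2 * b + 2)).mul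
    (multipliable_one_add_mul_pow (-(x ^ 2)⁻¹) hp four_pos (2 * b))).congr fun n => by
      simp only [jacobiSqFactor]; ring

section Theta

lemma jTheta_eq_mul_jacobiTheta₂ (a b : ℝ) (τ z : ℂ) :
    jTheta a b τ z = cexp (π * I * a ^ 2 * τ / 4 + π * I * a * (z + b / 2)) *
      jacobiTheta₂ (z + b / 2 + a * τ / 2) τ := by
  rw [jTheta, jacobiTheta₂, ← tsum_mul_left]
  congr 1 with n
  rw [jacobiTheta₂_term, ← Complex.exp_add]
  ring_nf

lemma cexp_two_pi_I_mul_add_half (z : ℂ) :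
    cexp (2 * π * I * (z + 1 / 2)) = -cexp (2 * π * I * z) := by
  rw [show 2 * π * I * (z + 1 / 2) = 2 * π * I * z + π * I by ring, Complex.exp_add, exp_pi_mul_I,
    mul_neg_one]

lemma cexp_two_pi_I_mul_add_half_mul (z τ : ℂ) :
    cexp (2 * π * I * (z + τ / 2)) = cexp (2 * π * I * z) * cexp (π * I * τ) := by
  rw [← Complex.exp_add]; ring_nf

variable {τ : ℂ} (z : ℂ)

lemma jTheta_zero_zero_eq_tprod (hτ : 0 < τ.im) :
    jTheta 0 0 τ z = ∏' n, jacobiTripleFactor (cexp (π * I * τ)) (cexp (2 * π * I * z)) n := by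
  rw [jTheta_eq_mul_jacobiTheta₂, jacobiTheta₂_eq_tprod _ hτ]
  simp

lemma jTheta_zero_one_eq_tprod (hτ : 0 < τ.im) :
    jTheta 0 1 τ z = ∏' n, jacobiTripleFactor (cexp (π * I * τ)) (-cexp (2 * π * I * z)) n := by
  rw [jTheta_eq_mul_jacobiTheta₂, show z + ((1 : ℝ) : ℂ) / 2 + ((0 : ℝ) : ℂ) * τ / 2 = z + 1 / 2 by
    push_cast; ring, jacobiTheta₂_eq_tprod _ hτ, cexp_two_pi_I_mul_add_half]
  simp

lemma jTheta_one_zero_eq_tprod (hτ : 0 < τ.im) :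
    jTheta 1 0 τ z = cexp (π * I * τ / 4 + π * I * z) *
      ∏' n, jacobiTripleFactor (cexp (π * I * τ)) (cexp (2 * π * I * z) * cexp (π * I * τ)) n := by
  rw [jTheta_eq_mul_jacobiTheta₂, show z + ((0 : ℝ) : ℂ) / 2 + ((1 : ℝ) : ℂ) * τ / 2 = z + τ / 2 by
    push_cast; ring, jacobiTheta₂_eq_tprod _ hτ, cexp_two_pi_I_mul_add_half_mul]
  congr 2
  push_cast
  ring

lemma jTheta_one_one_eq_tprod (hτ : 0 < τ.im) :
    jTheta 1 1 τ z = cexp (π * I * τ / 4 + π * I * (z + 1 / 2)) *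
      ∏' n, jacobiTripleFactor (cexp (π * I * τ))
        (-(cexp (2 * π * I * z) * cexp (π * I * τ))) n := by
  rw [jTheta_eq_mul_jacobiTheta₂, show z + ((1 : ℝ) : ℂ) / 2 + ((1 : ℝ) : ℂ) * τ / 2 =
    z + 1 / 2 + τ / 2 by push_cast; ring, jacobiTheta₂_eq_tprod _ hτ,
    cexp_two_pi_I_mul_add_half_mul, cexp_two_pi_I_mul_add_half, neg_mul]
  congr 2
  push_cast
  ring

lemma dedekindEta_eq_tprod :
    dedekindEta τ = cexp (π * I * τ / 12) * ∏' n : ℕ, (1 - cexp (π * I * τ) ^ (2 * n + 2)) := by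
  have hsq : cexp (π * I * τ) ^ 2 = cexp (2 * π * I * τ) := by
    rw [← Complex.exp_nat_mul]; ring_nf
  rw [dedekindEta]
  congr 2 with n
  rw [show 2 * n + 2 = 2 * (n + 1) by ring, pow_mul, hsq]

theorem jTheta_duplication (hτ : 0 < τ.im) :
    dedekindEta τ ^ 3 * jTheta 1 1 τ (2 * z) =
      jTheta 0 0 τ z * jTheta 0 1 τ z * jTheta 1 0 τ z * jTheta 1 1 τ z := by
  set P := cexp (π * I * τ)
  set X := cexp (2 * π * I * z) with hX
  have hP : ‖P‖ < 1 := norm_cexp_pi_mul_I_mul_lt_one hτ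
  have hP₀ : P ≠ 0 := Complex.exp_ne_zero _
  have hX₀ : X ≠ 0 := Complex.exp_ne_zero _
  have hX₂ : cexp (2 * π * I * (2 * z)) = X ^ 2 := by
    rw [hX, ← Complex.exp_nat_mul]; ring_nf
  have hA := (multipliable_one_sub_pow_two_mul_add_two hP).hasProd
  have hBeven : Multipliable fun n => jacobiSqFactor P X (2 * n) :=
    multipliable_jacobiSqFactor_two_mul_add hP X 0
  have hBodd := multipliable_jacobiSqFactor_two_mul_add hP X 1
  have hB := hBeven.hasProd.even_mul_odd hBodd.hasProd
  have hdouble := (hA.mul hB).congr_fun (jacobiTripleFactor_neg_sq_mul hP₀ hX₀)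
  have hfour := ((hA.pow 4).mul (hBeven.hasProd.mul hBodd.hasProd)).congr_fun
    (jacobiTripleFactor_mul_four hP₀ hX₀)
  have hfour' := (((multipliable_jacobiTripleFactor hP X).hasProd.mul
    (multipliable_jacobiTripleFactor hP (-X)).hasProd).mul
    (multipliable_jacobiTripleFactor hP (X * P)).hasProd).mul
    (multipliable_jacobiTripleFactor hP (-(X * P))).hasProd
  have hprefactor : cexp (π * I * τ / 12) ^ 3 * cexp (π * I * τ / 4 + π * I * (2 * z + 1 / 2)) =
      cexp (π * I * τ / 4 + π * I * z) * cexp (π * I * τ / 4 + π * I * (z + 1 / 2)) := by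
    rw [← Complex.exp_nat_mul, ← Complex.exp_add, ← Complex.exp_add]; ring_nf
  rw [dedekindEta_eq_tprod, jTheta_one_one_eq_tprod _ hτ, hX₂, hdouble.tprod_eq,
    jTheta_zero_zero_eq_tprod _ hτ, jTheta_zero_one_eq_tprod _ hτ, jTheta_one_zero_eq_tprod _ hτ,
    jTheta_one_one_eq_tprod _ hτ]
  linear_combination (∏' n, (1 - P ^ (2 * n + 2))) ^ 4 *
      ((∏' n, jacobiSqFactor P X (2 * n)) * ∏' n, jacobiSqFactor P X (2 * n + 1)) * hprefactor -
    cexp (π * I * τ / 4 + π * I * z) * cexp (π * I * τ / 4 + π * I * (z + 1 / 2)) *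
      hfour'.unique hfour

end Theta

lemma mul_div_mul_self_eq_div {G₀ : Type*} [CommGroupWithZero G₀] (a b : G₀) :
    a * b / (b * b) = a / b := by
  rw [mul_div_assoc, div_self_mul_self', div_eq_mul_inv]

lemma Psi_diag_eq (M : ℕ) (hM : 0 < M) (j : ℝ) {τ : ℂ} (hτ : 0 < τ.im) (z : ℂ) :
    Psi M 0 j j τ z z 0 = -I * cexp (2 * π * I * τ * (j ^ 2 / M)) * cexp (4 * π * I / M * j * z) *
      (jTheta 0 0 (M * τ) (z + j * τ) * jTheta 0 1 (M * τ) (z + j * τ) *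
        jTheta 1 0 (M * τ) (z + j * τ) / jTheta 1 1 (M * τ) (z + j * τ)) := by
  have hMτ : 0 < ((M : ℂ) * τ).im := by simpa using mul_pos (Nat.cast_pos.2 hM) hτ
  simp only [Psi, ofReal_zero, add_zero, sub_zero, mul_zero, neg_zero, zero_div,
    Complex.exp_zero, mul_one]
  rw [show z + z + (j + j) * τ = 2 * (z + j * τ) by ring,
    show 2 * π * I * τ * (j * j / M) = 2 * π * I * τ * (j ^ 2 / M) by ring,
    show 2 * π * I / M * (j * z + j * z) = 4 * π * I / M * j * z by ring,
    mul_assoc _ (dedekindEta _ ^ 3), jTheta_duplication _ hMτ, ← mul_assoc, mul_div_mul_self_eq_div]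
  ring

lemma RNSminus_eq {τ : ℂ} (hτ : 0 < τ.im) (z : ℂ) :
    RNSminus τ z = I * (jTheta 0 0 τ z * jTheta 1 0 τ z * jTheta 1 1 τ z) / jTheta 0 1 τ z := by
  rw [RNSminus, mul_assoc I, jTheta_duplication z hτ, sq,
    show jTheta 0 0 τ z * jTheta 0 1 τ z * jTheta 1 0 τ z * jTheta 1 1 τ z =
      jTheta 0 0 τ z * jTheta 1 0 τ z * jTheta 1 1 τ z * jTheta 0 1 τ z by ring,
    mul_div_assoc, mul_div_mul_self_eq_div]
  ring

theorem Psi_div_RNSminus_general (M : ℕ) (hM : 0 < M) (j : ℝ)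
    (τ : ℂ) (hτ : 0 < τ.im) (z : ℂ) :
    Psi M 0 j j τ z z 0 / RNSminus τ z =
      -(Complex.exp (2 * (Real.pi : ℂ) * I * τ * ((j : ℂ) ^ 2 / (M : ℂ))) *
        Complex.exp (4 * (Real.pi : ℂ) * I / (M : ℂ) * (j : ℂ) * z) *
        (jTheta 0 0 ((M : ℂ) * τ) (z + (j : ℂ) * τ) *
         jTheta 0 1 ((M : ℂ) * τ) (z + (j : ℂ) * τ) *
         jTheta 1 0 ((M : ℂ) * τ) (z + (j : ℂ) * τ) /
         jTheta 1 1 ((M : ℂ) * τ) (z + (j : ℂ) * τ)) *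
        (jTheta 0 1 τ z / (jTheta 0 0 τ z * jTheta 1 0 τ z * jTheta 1 1 τ z))) := by
  rw [Psi_diag_eq M hM j hτ, RNSminus_eq hτ, div_div_eq_mul_div]
  field_simp

/-- Lemma 9.2, 1)(ii) of the paper: the NS super-character quotient. -/
theorem Psi_div_RNSminus (M : ℕ) (hM : 0 < M) (j : ℝ) (hj : ∃ n : ℤ, j = 1/2 + n)
    (τ : ℂ) (hτ : 0 < τ.im) (z : ℂ)
    (h1 : jTheta 1 1 ((M : ℂ) * τ) (z + (j : ℂ) * τ) ≠ 0)
    (h2 : jTheta 0 0 τ z ≠ 0) (h3 : jTheta 0 1 τ z ≠ 0)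
    (h4 : jTheta 1 0 τ z ≠ 0) (h5 : jTheta 1 1 τ z ≠ 0)
    (h6 : jTheta 1 1 τ (2 * z) ≠ 0) :
    Psi M 0 j j τ z z 0 / RNSminus τ z =
      -(Complex.exp (2 * (Real.pi : ℂ) * I * τ * ((j : ℂ) ^ 2 / (M : ℂ))) *
        Complex.exp (4 * (Real.pi : ℂ) * I / (M : ℂ) * (j : ℂ) * z) *
        (jTheta 0 0 ((M : ℂ) * τ) (z + (j : ℂ) * τ) *
         jTheta 0 1 ((M : ℂ) * τ) (z + (j : ℂ) * τ) *
         jTheta 1 0 ((M : ℂ) * τ) (z + (j : ℂ) * τ) /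
         jTheta 1 1 ((M : ℂ) * τ) (z + (j : ℂ) * τ)) *
        (jTheta 0 1 τ z / (jTheta 0 0 τ z * jTheta 1 0 τ z * jTheta 1 1 τ z))) :=
  Psi_div_RNSminus_general M hM j τ hτ z
end
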